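/- For any nonnegative integer l and positive integer n, the tail sum t*_{∞,n+1}({2}^l) = sum over k_1 ≥ ... ≥ k_l ≥ n+1 of 1/((2k_1-1)²···(2k_l-1)²) satisfies t*_{∞,n+1}({2}^l) < (1/(2(2n-1)))^l for l ≥ 1. -/

import Mathlib

open Filter

/-- The tail multiple `t`-harmonic star sum `t*_{∞,n+1}({2}^l)`: the sum over weakly
decreasing tuples `k₁ ≥ ⋯ ≥ k_l ≥ n+1` of `1/((2k₁-1)²⋯(2k_l-1)²)`. -/
noncomputable def tTail (n l : ℕ) : ℝ :=
  ∑' k : {k : Fin l → ℕ // (∀ i j : Fin l, i ≤ j → k j ≤ k i) ∧ ∀ i, n + 1 ≤ k i},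
    ∏ i : Fin l, (1 : ℝ) / (2 * (k.1 i : ℝ) - 1) ^ 2

private lemma tele_hasSum (n : ℕ) (hn : 0 < n) :
    HasSum (fun j : ℕ => 1/((n:ℝ)+j) - 1/((n:ℝ)+j+1)) (1/(n:ℝ)) := by
  have hn' : (0:ℝ) < n := by exact_mod_cast hn
  have hnonneg : ∀ j : ℕ, 0 ≤ 1/((n:ℝ)+j) - 1/((n:ℝ)+j+1) := fun j => by
    have h1 : (0:ℝ) < (n:ℝ)+j := by positivity
    have h2 : 1/((n:ℝ)+j+1) ≤ 1/((n:ℝ)+j) := by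
      apply one_div_le_one_div_of_le h1; linarith
    linarith
  rw [hasSum_iff_tendsto_nat_of_nonneg hnonneg]
  have key : ∀ N : ℕ, ∑ j ∈ Finset.range N, (1/((n:ℝ)+j) - 1/((n:ℝ)+j+1))
      = 1/(n:ℝ) - 1/((n:ℝ)+N) := by
    intro N
    have := Finset.sum_range_sub' (fun j : ℕ => 1/((n:ℝ)+j)) N
    simp only [Nat.cast_zero, add_zero, Nat.cast_add, Nat.cast_one] at this
    rw [← this]
    apply Finset.sum_congr rfl
    intro j _
    push_cast
    ring_nf
  simp only [key]
  have h0 : Tendsto (fun N : ℕ => 1/((n:ℝ)+N)) atTop (nhds 0) := by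
    simp only [one_div]
    apply Tendsto.inv_tendsto_atTop
    exact tendsto_atTop_add_const_left _ _ tendsto_natCast_atTop_atTop
  simpa using (tendsto_const_nhds (x := 1/(n:ℝ))).sub h0

private noncomputable def hterm (n : ℕ) : {m : ℕ // n + 1 ≤ m} → ℝ :=
  fun m => (1:ℝ) / (2 * ((m : ℕ) : ℝ) - 1) ^ 2

private def eAdd (n : ℕ) : ℕ ≃ {m : ℕ // n + 1 ≤ m} where
  toFun j := ⟨j + (n+1), Nat.le_add_left _ _⟩
  invFun m := m.1 - (n+1)
  left_inv j := by simp
  right_inv m := by ext; simp [Nat.sub_add_cancel m.2]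

private lemma hterm_nonneg (n : ℕ) (m : {m : ℕ // n + 1 ≤ m}) : 0 ≤ hterm n m := by
  unfold hterm; positivity

private lemma hterm_le (n : ℕ) (hn : 0 < n) (j : ℕ) :
    hterm n (eAdd n j) ≤ (1/4) * (1/((n:ℝ)+j) - 1/((n:ℝ)+j+1)) := by
  have hn' : (0:ℝ) < n := by exact_mod_cast hn
  set x : ℝ := (n:ℝ) + j with hx
  have hx0 : (0:ℝ) < x := by positivity
  have hrhs : (1/4) * (1/x - 1/(x+1)) = 1/((2*x)*(2*x+2)) := by
    field_simp
    ring
  rw [hrhs]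
  have hval : hterm n (eAdd n j) = 1/(2*x+1)^2 := by
    show (1:ℝ) / (2 * ((j + (n+1) : ℕ) : ℝ) - 1) ^ 2 = _
    push_cast
    rw [hx]
    ring_nf
  rw [hval]
  apply one_div_le_one_div_of_le
  · positivity
  · nlinarith

private lemma hterm_summable_comp (n : ℕ) (hn : 0 < n) :
    Summable (fun j : ℕ => hterm n (eAdd n j)) :=
  Summable.of_nonneg_of_le (fun j => hterm_nonneg n _) (hterm_le n hn)
    ((tele_hasSum n hn).summable.mul_left (1/4))

private lemma hterm_summable (n : ℕ) (hn : 0 < n) : Summable (hterm n) :=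
  (Equiv.summable_iff (eAdd n)).mp (hterm_summable_comp n hn)

private lemma tsum_hterm_le (n : ℕ) (hn : 0 < n) :
    ∑' m, hterm n m ≤ 1 / (4 * (n:ℝ)) := by
  rw [← Equiv.tsum_eq (eAdd n) (hterm n)]
  calc ∑' j, hterm n (eAdd n j)
      ≤ ∑' j : ℕ, (1/4) * (1/((n:ℝ)+j) - 1/((n:ℝ)+j+1)) :=
        Summable.tsum_le_tsum (hterm_le n hn) (hterm_summable_comp n hn)
          ((tele_hasSum n hn).summable.mul_left (1/4))
    _ = (1/4) * (1/(n:ℝ)) := by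
        rw [tsum_mul_left, (tele_hasSum n hn).tsum_eq]
    _ = 1 / (4 * (n:ℝ)) := by ring

private lemma pi_hasSum_succ (n l : ℕ) (hsummable : Summable (hterm n))
    (ih : HasSum (fun k : Fin l → {m : ℕ // n + 1 ≤ m} => ∏ i, hterm n (k i))
      ((∑' m, hterm n m) ^ l)) :
    HasSum (fun k : Fin (l+1) → {m : ℕ // n + 1 ≤ m} => ∏ i, hterm n (k i))
      ((∑' m, hterm n m) ^ (l+1)) := by
  set S := ∑' m, hterm n m with hS
  have hSsum : HasSum (hterm n) S := hsummable.hasSum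
  have hnonneg2 : ∀ k : Fin l → {m : ℕ // n + 1 ≤ m}, 0 ≤ ∏ i, hterm n (k i) :=
    fun k => Finset.prod_nonneg fun i _ => hterm_nonneg n _
  have hsum2 : Summable (fun p : {m : ℕ // n + 1 ≤ m} × (Fin l → {m : ℕ // n + 1 ≤ m}) =>
      hterm n p.1 * ∏ i, hterm n (p.2 i)) := by
    refine Summable.mul_of_nonneg (f := hterm n)
      (g := fun k : Fin l → {m : ℕ // n + 1 ≤ m} => ∏ i, hterm n (k i))
      hsummable ih.summable ?_ ?_
    · intro m; exact hterm_nonneg n m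
    · intro k; exact hnonneg2 k
  have hprod : HasSum (fun p : {m : ℕ // n + 1 ≤ m} × (Fin l → {m : ℕ // n + 1 ≤ m}) =>
      hterm n p.1 * ∏ i, hterm n (p.2 i)) (S * S ^ l) :=
    HasSum.mul (f := hterm n)
      (g := fun k : Fin l → {m : ℕ // n + 1 ≤ m} => ∏ i, hterm n (k i))
      hSsum ih hsum2
  rw [pow_succ']
  rw [← Equiv.hasSum_iff (Fin.consEquiv (fun _ : Fin (l+1) => {m : ℕ // n + 1 ≤ m}))]
  have hfun : ((fun k : Fin (l+1) → {m : ℕ // n + 1 ≤ m} => ∏ i, hterm n (k i)) ∘ (Fin.consEquiv (fun _ : Fin (l+1) => {m : ℕ // n + 1 ≤ m})))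
      = fun p : {m : ℕ // n + 1 ≤ m} × (Fin l → {m : ℕ // n + 1 ≤ m}) =>
        hterm n p.1 * ∏ i, hterm n (p.2 i) := by
    funext p
    simp [Function.comp, Fin.consEquiv_apply, Fin.prod_univ_succ]
  rw [hfun]
  exact hprod

private lemma pi_hasSum (n : ℕ) (hn : 0 < n) (l : ℕ) :
    HasSum (fun k : Fin l → {m : ℕ // n + 1 ≤ m} => ∏ i, hterm n (k i))
      ((∑' m, hterm n m) ^ l) := by
  induction l with
  | zero =>
      have : (fun k : Fin 0 → {m : ℕ // n + 1 ≤ m} => ∏ i, hterm n (k i)) = fun _ => 1 := by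
        funext k; simp
      rw [this, pow_zero]
      simpa using hasSum_fintype (fun _ : Fin 0 → {m : ℕ // n + 1 ≤ m} => (1:ℝ))
  | succ l ih => exact pi_hasSum_succ n l (hterm_summable n hn) ih

private def iota (n l : ℕ) :
    {k : Fin l → ℕ // (∀ i j : Fin l, i ≤ j → k j ≤ k i) ∧ ∀ i, n + 1 ≤ k i} →
      (Fin l → {m : ℕ // n + 1 ≤ m}) :=
  fun k i => ⟨k.1 i, k.2.2 i⟩

theorem tTail_lt (n l : ℕ) (hn : 0 < n) (hl : 1 ≤ l) :
    tTail n l < (1 / (2 * (2 * (n : ℝ) - 1))) ^ l := by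
  have hn' : (0:ℝ) < n := by exact_mod_cast hn
  have hn1 : (1:ℝ) ≤ n := by exact_mod_cast hn
  set S := ∑' m, hterm n m with hS
  have hpi := pi_hasSum n hn l
  have hinj : Function.Injective (iota n l) := by
    intro a b hab
    apply Subtype.ext
    funext j
    exact congrArg Subtype.val (congrFun hab j)
  have hle : tTail n l ≤ S ^ l := by
    rw [← hpi.tsum_eq]
    unfold tTail
    refine Summable.tsum_le_tsum_of_inj (f := fun k : {k : Fin l → ℕ //
        (∀ i j : Fin l, i ≤ j → k j ≤ k i) ∧ ∀ i, n + 1 ≤ k i} =>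
        ∏ i : Fin l, (1 : ℝ) / (2 * (k.1 i : ℝ) - 1) ^ 2)
      (g := fun k : Fin l → {m : ℕ // n + 1 ≤ m} => ∏ i, hterm n (k i))
      (iota n l) hinj ?_ ?_ ?_ ?_
    · intro c _
      exact Finset.prod_nonneg fun i _ => hterm_nonneg n _
    · intro a
      exact le_of_eq (Finset.prod_congr rfl fun i _ => rfl)
    · exact (hpi.summable.comp_injective hinj).congr
        (fun a => Finset.prod_congr rfl fun i _ => rfl)
    · exact hpi.summable
  have hS0 : 0 ≤ S := tsum_nonneg (hterm_nonneg n)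
  have hSle : S ≤ 1 / (4 * (n:ℝ)) := tsum_hterm_le n hn
  have hlt : 1 / (4 * (n:ℝ)) < 1 / (2 * (2 * (n:ℝ) - 1)) := by
    apply one_div_lt_one_div_of_lt
    · nlinarith
    · nlinarith
  calc tTail n l ≤ S ^ l := hle
    _ ≤ (1 / (4 * (n:ℝ))) ^ l := pow_le_pow_left₀ hS0 hSle l
    _ < (1 / (2 * (2 * (n:ℝ) - 1))) ^ l := by
        apply pow_lt_pow_left₀ hlt (by positivity) (by omega)
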